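/- Let j, k be natural numbers with 0 < j < k and let a₁, a₂, b₁, b₂ be real numbers. Set a₀ = −((k+1)a₁ + (j+1)a₂)/((j+1)(k+1)), b₀ = −((k+1)b₁ + (j+1)b₂)/((j+1)(k+1)), A(t) = a₀ + a₁tʲ + a₂tᵏ and B(t) = b₀ + b₁tʲ + b₂tᵏ. Then ∫₀¹ A(t)(∫₀ᵗ B(s) ds) dt = jk(k−j)(a₂b₁ − a₁b₂) / (2(1+j)(2+j)(1+k)(2+k)(2+j+k)). -/
import Mathlib

open intervalIntegral

lemma int_cmul_pow (c : ℝ) (n : ℕ) :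
    ∫ t in (0:ℝ)..1, c * t ^ n = c / ((n : ℝ) + 1) := by
  rw [intervalIntegral.integral_const_mul, integral_pow]
  simp [div_eq_mul_inv]

set_option maxHeartbeats 1000000 in
theorem polynomial_third_lyapunov_constant
    (j k : ℕ) (hj : 0 < j) (hjk : j < k)
    (a₁ a₂ b₁ b₂ : ℝ)
    (a₀ b₀ : ℝ)
    (ha₀ : a₀ = -(((k : ℝ) + 1) * a₁ + ((j : ℝ) + 1) * a₂) / (((j : ℝ) + 1) * ((k : ℝ) + 1)))
    (hb₀ : b₀ = -(((k : ℝ) + 1) * b₁ + ((j : ℝ) + 1) * b₂) / (((j : ℝ) + 1) * ((k : ℝ) + 1))) :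
    (∫ t in (0:ℝ)..1,
      (a₀ + a₁ * t ^ j + a₂ * t ^ k) *
        ∫ s in (0:ℝ)..t, (b₀ + b₁ * s ^ j + b₂ * s ^ k)) =
    (j : ℝ) * (k : ℝ) * ((k : ℝ) - (j : ℝ)) * (a₂ * b₁ - a₁ * b₂) /
      (2 * (1 + (j : ℝ)) * (2 + (j : ℝ)) * (1 + (k : ℝ)) * (2 + (k : ℝ)) *
        (2 + (j : ℝ) + (k : ℝ))) := by
  have hj1 : ((j : ℝ) + 1) ≠ 0 := by positivity
  have hk1 : ((k : ℝ) + 1) ≠ 0 := by positivity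
  have h0j : (0:ℝ) ^ (j + 1) = 0 := zero_pow (by omega)
  have h0k : (0:ℝ) ^ (k + 1) = 0 := zero_pow (by omega)
  have hinner : ∀ t : ℝ, (∫ s in (0:ℝ)..t, (b₀ + b₁ * s ^ j + b₂ * s ^ k))
      = b₀ * t + b₁ / ((j : ℝ) + 1) * t ^ (j + 1) + b₂ / ((k : ℝ) + 1) * t ^ (k + 1) := by
    intro t
    rw [intervalIntegral.integral_add, intervalIntegral.integral_add,
      intervalIntegral.integral_const, intervalIntegral.integral_const_mul,
      intervalIntegral.integral_const_mul, integral_pow, integral_pow, h0j, h0k]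
    · rw [smul_eq_mul]; ring
    · exact (by fun_prop : Continuous fun s : ℝ => b₀).intervalIntegrable _ _
    · exact (by fun_prop : Continuous fun s : ℝ => b₁ * s ^ j).intervalIntegrable _ _
    · exact (by fun_prop : Continuous fun s : ℝ => b₀ + b₁ * s ^ j).intervalIntegrable _ _
    · exact (by fun_prop : Continuous fun s : ℝ => b₂ * s ^ k).intervalIntegrable _ _
  have hcong : (∫ t in (0:ℝ)..1,
      (a₀ + a₁ * t ^ j + a₂ * t ^ k) *
        ∫ s in (0:ℝ)..t, (b₀ + b₁ * s ^ j + b₂ * s ^ k))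
      = ∫ t in (0:ℝ)..1,
        (a₀ * b₀ * t ^ 1 + a₀ * b₁ / ((j:ℝ)+1) * t ^ (j+1) + a₀ * b₂ / ((k:ℝ)+1) * t ^ (k+1)
        + a₁ * b₀ * t ^ (j+1) + a₁ * b₁ / ((j:ℝ)+1) * t ^ (j+j+1) + a₁ * b₂ / ((k:ℝ)+1) * t ^ (j+k+1)
        + a₂ * b₀ * t ^ (k+1) + a₂ * b₁ / ((j:ℝ)+1) * t ^ (j+k+1) + a₂ * b₂ / ((k:ℝ)+1) * t ^ (k+k+1)) := by
    refine intervalIntegral.integral_congr fun t _ => ?_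
    rw [hinner t]
    ring
  rw [hcong]
  rw [intervalIntegral.integral_add, intervalIntegral.integral_add,
    intervalIntegral.integral_add, intervalIntegral.integral_add,
    intervalIntegral.integral_add, intervalIntegral.integral_add,
    intervalIntegral.integral_add, intervalIntegral.integral_add] <;>
    first
      | exact Continuous.intervalIntegrable (by fun_prop) _ _
      | skip
  rw [int_cmul_pow, int_cmul_pow, int_cmul_pow, int_cmul_pow, int_cmul_pow,
    int_cmul_pow, int_cmul_pow, int_cmul_pow, int_cmul_pow]
  subst ha₀ hb₀
  have h2j : ((j:ℝ) + 1 + 1) ≠ 0 := by positivity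
  have h2k : ((k:ℝ) + 1 + 1) ≠ 0 := by positivity
  have hjk2 : ((j:ℝ) + (k:ℝ) + 1 + 1) ≠ 0 := by positivity
  have h2jj : ((j:ℝ) + (j:ℝ) + 1 + 1) ≠ 0 := by positivity
  have h2kk : ((k:ℝ) + (k:ℝ) + 1 + 1) ≠ 0 := by positivity
  have h1j : (1 + (j:ℝ)) ≠ 0 := by positivity
  have h1k : (1 + (k:ℝ)) ≠ 0 := by positivity
  have h2j' : (2 + (j:ℝ)) ≠ 0 := by positivity
  have h2k' : (2 + (k:ℝ)) ≠ 0 := by positivity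
  have hjk' : (2 + (j:ℝ) + (k:ℝ)) ≠ 0 := by positivity
  push_cast
  field_simp
  ring
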